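/- Assume α₂ = α₃ = λ_t = 0 and λ_d + λ_p·α₁ ≠ 0. Let φ be a constant tensor field and ρ > 0 with Σ_{b,c} φ_{abc}·φ_{a'bc} = N²·ρ·δ_{aa'} for all a,a', and assume the solution condition λ₂ + (λ_d + λ_p·α₁)·ρ = 0. Then: (1) H(φ)φ = −2λ₂·φ; (2) for any symmetric matrix S ∈ ℝ^{N×N} with trace zero, the tensor field χ_{abc} = Σ_{a'} S_{aa'}·φ_{a'bc} satisfies H(φ)χ = [−2λ₂·λ_p·α₁/(λ_p·α₁ + λ_d)]·χ. -/

import Mathlib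

open Finset

/-- The potential of the quartic `O(N)^3` tensor model. -/
noncomputable def potV (N : ℕ) (l2 ld lp lt a1 a2 a3 : ℝ)
    (φ : Fin N → Fin N → Fin N → ℝ) : ℝ :=
  l2 / 2 * (∑ a, ∑ b, ∑ c, (φ a b c) ^ 2)
  + ld / (4 * (N : ℝ) ^ 3) * (∑ a, ∑ b, ∑ c, (φ a b c) ^ 2) ^ 2
  + lp / (4 * (N : ℝ) ^ 2) *
      (a1 * ∑ a, ∑ b, ∑ c, ∑ a', ∑ b', ∑ c',
          φ a b c * φ a b' c' * φ a' b' c' * φ a' b c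
       + a2 * ∑ a, ∑ b, ∑ c, ∑ a', ∑ b', ∑ c',
          φ a b c * φ a' b c' * φ a' b' c' * φ a b' c
       + a3 * ∑ a, ∑ b, ∑ c, ∑ a', ∑ b', ∑ c',
          φ a b c * φ a' b' c * φ a' b' c' * φ a b c')
  + lt / (4 * (N : ℝ) ^ ((3 : ℝ) / 2)) *
      ∑ a, ∑ b, ∑ c, ∑ a', ∑ b', ∑ c',
        φ a b c * φ a b' c' * φ a' b c' * φ a' b' c

/-- The field equations of the quartic `O(N)^3` tensor model (vanishing gradient of `potV`). -/
def FieldEqs (N : ℕ) (l2 ld lp lt a1 a2 a3 : ℝ)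
    (φ : Fin N → Fin N → Fin N → ℝ) : Prop :=
  ∀ a b c,
    l2 * φ a b c
    + ld / (N : ℝ) ^ 3 * (∑ a', ∑ b', ∑ c', (φ a' b' c') ^ 2) * φ a b c
    + lp / (N : ℝ) ^ 2 *
        (a1 * ∑ a', ∑ b', ∑ c', φ a b' c' * φ a' b' c' * φ a' b c
         + a2 * ∑ a', ∑ b', ∑ c', φ a' b c' * φ a' b' c' * φ a b' c
         + a3 * ∑ a', ∑ b', ∑ c', φ a' b' c * φ a' b' c' * φ a b c')
    + lt / (N : ℝ) ^ ((3 : ℝ) / 2) *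
        ∑ a', ∑ b', ∑ c', φ a b' c' * φ a' b c' * φ a' b' c = 0

/-- The Hessian of `potV` at `φ` (the matrix of second partial derivatives
`H(φ)_{abc,a'b'c'} = ∂²V/∂φ_{abc}∂φ_{a'b'c'}`), acting on a tensor field `χ` by
`(H(φ)χ)_{abc} = Σ_{a'b'c'} H(φ)_{abc,a'b'c'} χ_{a'b'c'}`. -/
noncomputable def hessApply (N : ℕ) (l2 ld lp lt a1 a2 a3 : ℝ)
    (φ χ : Fin N → Fin N → Fin N → ℝ) : Fin N → Fin N → Fin N → ℝ :=
  fun a b c =>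
    deriv (fun s : ℝ =>
      deriv (fun t : ℝ =>
        potV N l2 ld lp lt a1 a2 a3
          (fun a' b' c' => φ a' b' c' + t * χ a' b' c'
            + s * (if a' = a ∧ b' = b ∧ c' = c then (1 : ℝ) else 0))) 0) 0

/-!
For `α₂ = α₃ = λ_t = 0` the potential depends on `ψ` only through the slice Gram matrix
`G(ψ, ψ)_{aa'} = Σ_{bc} ψ_{abc} ψ_{a'bc}`:
`V = λ₂/2 tr G + λ_d/(4N³) (tr G)² + λ_pα₁/(4N²) Σ_{aa'} G_{aa'}²`.
The Hessian is therefore the mixed second derivative of this polynomial in `G` along the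
Gram matrices of `φ + tχ + s e_{abc}`. At a configuration with orthogonal slices,
`G(φ, φ) = N²ρ·1`, and for `χ = Sφ` with `S` symmetric `G(χ, φ) = G(φ, χ) = N²ρ S`, which gives
`H(φ)(Sφ) = (λ₂ + (λ_d + 3λ_pα₁)ρ) Sφ + (2λ_dρ tr S / N) φ`.
Taking `S = 1`, resp. `tr S = 0`, and using `λ₂ = -(λ_d + λ_pα₁)ρ` yields both eigenvalues.
-/

open Matrix

section GramPotential

variable {ι : Type*} [Fintype ι]

def frobInner {κ : Type*} [Fintype κ] (A B : Matrix ι κ ℝ) : ℝ := ∑ x, ∑ y, A x y * B x y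

lemma frobInner_comm {κ : Type*} [Fintype κ] (A B : Matrix ι κ ℝ) :
    frobInner A B = frobInner B A := by
  simp only [frobInner, mul_comm]

lemma frobInner_add_left {κ : Type*} [Fintype κ] (A B C : Matrix ι κ ℝ) :
    frobInner (A + B) C = frobInner A C + frobInner B C := by
  simp only [frobInner, Matrix.add_apply, add_mul, Finset.sum_add_distrib]

lemma frobInner_smul_one_left [DecidableEq ι] (k : ℝ) (A : Matrix ι ι ℝ) :
    frobInner (k • (1 : Matrix ι ι ℝ)) A = k * A.trace := by
  simp [frobInner, one_apply, trace, Finset.mul_sum]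

def gramPotential (c₁ c₂ c₃ : ℝ) (M : Matrix ι ι ℝ) : ℝ :=
  c₁ * M.trace + c₂ * M.trace ^ 2 + c₃ * frobInner M M

def gramPotentialDeriv (c₁ c₂ c₃ : ℝ) (M M' : Matrix ι ι ℝ) : ℝ :=
  c₁ * M'.trace + 2 * c₂ * (M.trace * M'.trace) + 2 * c₃ * frobInner M M'

variable {t : ℝ}

lemma hasDerivAt_trace {M : ℝ → Matrix ι ι ℝ} {M' : Matrix ι ι ℝ}
    (hM : ∀ x y, HasDerivAt (fun s => M s x y) (M' x y) t) :
    HasDerivAt (fun s => (M s).trace) M'.trace t :=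
  HasDerivAt.fun_sum fun x _ => hM x x

lemma hasDerivAt_frobInner {A B : ℝ → Matrix ι ι ℝ} {A' B' : Matrix ι ι ℝ}
    (hA : ∀ x y, HasDerivAt (fun s => A s x y) (A' x y) t)
    (hB : ∀ x y, HasDerivAt (fun s => B s x y) (B' x y) t) :
    HasDerivAt (fun s => frobInner (A s) (B s)) (frobInner A' (B t) + frobInner (A t) B') t := by
  simpa only [frobInner, ← Finset.sum_add_distrib] using
    HasDerivAt.fun_sum fun x _ => HasDerivAt.fun_sum fun y _ => (hA x y).fun_mul (hB x y)

lemma hasDerivAt_gramPotential (c₁ c₂ c₃ : ℝ) {M : ℝ → Matrix ι ι ℝ} {M' : Matrix ι ι ℝ}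
    (hM : ∀ x y, HasDerivAt (fun s => M s x y) (M' x y) t) :
    HasDerivAt (fun s => gramPotential c₁ c₂ c₃ (M s))
      (gramPotentialDeriv c₁ c₂ c₃ (M t) M') t := by
  have h := (((hasDerivAt_trace hM).const_mul c₁).add
    (((hasDerivAt_trace hM).pow 2).const_mul c₂)).add
    ((hasDerivAt_frobInner hM hM).const_mul c₃)
  refine h.congr_deriv ?_
  rw [gramPotentialDeriv, frobInner_comm M']
  ring

lemma hasDerivAt_gramPotentialDeriv (c₁ c₂ c₃ : ℝ) {M K : ℝ → Matrix ι ι ℝ}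
    {M' K' : Matrix ι ι ℝ} (hM : ∀ x y, HasDerivAt (fun s => M s x y) (M' x y) t)
    (hK : ∀ x y, HasDerivAt (fun s => K s x y) (K' x y) t) :
    HasDerivAt (fun s => gramPotentialDeriv c₁ c₂ c₃ (M s) (K s))
      (c₁ * K'.trace + 2 * c₂ * (M'.trace * (K t).trace + (M t).trace * K'.trace)
        + 2 * c₃ * (frobInner M' (K t) + frobInner (M t) K')) t :=
  (((hasDerivAt_trace hK).const_mul c₁).add
    (((hasDerivAt_trace hM).fun_mul (hasDerivAt_trace hK)).const_mul (2 * c₂))).add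
    ((hasDerivAt_frobInner hM hK).const_mul (2 * c₃))

end GramPotential

section SliceMul

variable {ι β γ : Type*} [Fintype ι]

def sliceMul (S : Matrix ι ι ℝ) (u : ι → β → γ → ℝ) : ι → β → γ → ℝ :=
  fun a b c => ∑ a', S a a' * u a' b c

lemma sliceMul_one [DecidableEq ι] (u : ι → β → γ → ℝ) : sliceMul 1 u = u := by
  ext a b c
  simp [sliceMul, one_apply]

end SliceMul

section SliceGram

variable {ι β γ : Type*} [Fintype β] [Fintype γ]

def sliceGram (u v : ι → β → γ → ℝ) : Matrix ι ι ℝ :=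
  of fun x y => ∑ b, ∑ c, u x b c * v y b c

def basisTensor [DecidableEq ι] [DecidableEq β] [DecidableEq γ] (a : ι) (b : β) (c : γ) :
    ι → β → γ → ℝ :=
  fun a' b' c' => if a' = a ∧ b' = b ∧ c' = c then 1 else 0

lemma sliceGram_comm (u v : ι → β → γ → ℝ) : sliceGram u v = (sliceGram v u)ᵀ := by
  ext x y
  simp [sliceGram, mul_comm]

lemma sliceGram_zero_left (v : ι → β → γ → ℝ) : sliceGram 0 v = 0 := by
  ext x y
  simp [sliceGram]

lemma sliceGram_zero_right (u : ι → β → γ → ℝ) : sliceGram u 0 = 0 := by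
  rw [sliceGram_comm, sliceGram_zero_left, transpose_zero]

lemma hasDerivAt_sliceGram {U V : ℝ → ι → β → γ → ℝ} {U' V' : ι → β → γ → ℝ} {t : ℝ}
    (hU : HasDerivAt U U' t) (hV : HasDerivAt V V' t) (x y : ι) :
    HasDerivAt (fun s => sliceGram (U s) (V s) x y)
      ((sliceGram U' (V t) + sliceGram (U t) V') x y) t := by
  have entry : ∀ {W : ℝ → ι → β → γ → ℝ} {W'}, HasDerivAt W W' t →
      ∀ a b c, HasDerivAt (fun s => W s a b c) (W' a b c) t := fun h a b c =>
    hasDerivAt_pi.1 (hasDerivAt_pi.1 (hasDerivAt_pi.1 h a) b) c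
  simpa only [sliceGram, Matrix.add_apply, of_apply, ← Finset.sum_add_distrib] using
    HasDerivAt.fun_sum fun b _ => HasDerivAt.fun_sum fun c _ =>
      (entry hU x b c).fun_mul (entry hV y b c)

lemma sliceGram_basisTensor_left [DecidableEq ι] [DecidableEq β] [DecidableEq γ]
    (a : ι) (b : β) (c : γ) (v : ι → β → γ → ℝ) :
    sliceGram (basisTensor a b c) v = of fun x y => if x = a then v y b c else 0 := by
  ext x y
  by_cases hx : x = a <;> simp [sliceGram, basisTensor, hx, ite_and]

lemma sliceGram_basisTensor_right [DecidableEq ι] [DecidableEq β] [DecidableEq γ]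
    (a : ι) (b : β) (c : γ) (v : ι → β → γ → ℝ) :
    sliceGram v (basisTensor a b c) = of fun x y => if y = a then v x b c else 0 := by
  rw [sliceGram_comm, sliceGram_basisTensor_left]
  rfl

variable [Fintype ι]

lemma sliceGram_sliceMul_left (S : Matrix ι ι ℝ) (u v : ι → β → γ → ℝ) :
    sliceGram (sliceMul S u) v = S * sliceGram u v := by
  ext x y
  simp only [sliceGram, sliceMul, of_apply, mul_apply, Finset.mul_sum, Finset.sum_mul]
  conv_rhs => rw [Finset.sum_comm]
  refine Finset.sum_congr rfl fun b _ => ?_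
  rw [Finset.sum_comm]
  exact Finset.sum_congr rfl fun a' _ => Finset.sum_congr rfl fun c _ => by ring

lemma sliceGram_sliceMul_right (S : Matrix ι ι ℝ) (u v : ι → β → γ → ℝ) :
    sliceGram u (sliceMul S v) = sliceGram u v * Sᵀ := by
  rw [sliceGram_comm, sliceGram_sliceMul_left, transpose_mul, ← sliceGram_comm]

lemma trace_sliceGram (u v : ι → β → γ → ℝ) :
    (sliceGram u v).trace = ∑ a, ∑ b, ∑ c, u a b c * v a b c := rfl

lemma frobInner_sliceGram_sliceGram (u v w z : ι → β → γ → ℝ) :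
    frobInner (sliceGram u z) (sliceGram v w) =
      ∑ a, ∑ b, ∑ c, ∑ a', ∑ b', ∑ c', u a b c * v a b' c' * w a' b' c' * z a' b c := by
  simp only [frobInner, sliceGram, of_apply, Finset.sum_mul_sum]
  refine Finset.sum_congr rfl fun a _ => ?_
  simp only [Finset.sum_comm (s := (Finset.univ : Finset ι))]
  refine Finset.sum_congr rfl fun b _ => ?_
  rw [Finset.sum_comm]
  refine Finset.sum_congr rfl fun c _ => Finset.sum_congr rfl fun b' _ =>
    Finset.sum_congr rfl fun c' _ => Finset.sum_congr rfl fun a' _ => by ring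

end SliceGram

section BasisTensor

variable {ι β γ : Type*} [Fintype ι] [Fintype β] [Fintype γ]
  [DecidableEq ι] [DecidableEq β] [DecidableEq γ] (a : ι) (b : β) (c : γ) (v : ι → β → γ → ℝ)

lemma trace_sliceGram_basisTensor_left : (sliceGram (basisTensor a b c) v).trace = v a b c := by
  simp [sliceGram_basisTensor_left, trace]

lemma trace_sliceGram_basisTensor_right : (sliceGram v (basisTensor a b c)).trace = v a b c := by
  simp [sliceGram_basisTensor_right, trace]

lemma frobInner_sliceGram_basisTensor_left (A : Matrix ι ι ℝ) :
    frobInner (sliceGram (basisTensor a b c) v) A = (A *ᵥ fun y => v y b c) a := by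
  simp [sliceGram_basisTensor_left, frobInner, mulVec, dotProduct, mul_comm]

lemma frobInner_sliceGram_basisTensor_right (A : Matrix ι ι ℝ) :
    frobInner (sliceGram v (basisTensor a b c)) A = (Aᵀ *ᵥ fun y => v y b c) a := by
  simp [sliceGram_basisTensor_right, frobInner, mulVec, dotProduct, mul_comm]

end BasisTensor

section SecondVariation

variable {ι β γ : Type*} [Fintype ι] [Fintype β] [Fintype γ] (c₁ c₂ c₃ : ℝ)

/-- `∂ₛ ∂ₜ gramPotential c₁ c₂ c₃ (sliceGram ψ ψ)` at `t = s = 0`, for `ψ = u + t • v + s • w`. -/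
def gramHessian (u v w : ι → β → γ → ℝ) : ℝ :=
  c₁ * (sliceGram v w + sliceGram w v).trace
  + 2 * c₂ * ((sliceGram w u + sliceGram u w).trace * (sliceGram v u + sliceGram u v).trace
    + (sliceGram u u).trace * (sliceGram v w + sliceGram w v).trace)
  + 2 * c₃ * (frobInner (sliceGram w u + sliceGram u w) (sliceGram v u + sliceGram u v)
    + frobInner (sliceGram u u) (sliceGram v w + sliceGram w v))

lemma hasDerivAt_gramPotential_sliceGram_line (u v : ι → β → γ → ℝ) :
    HasDerivAt (fun t : ℝ => gramPotential c₁ c₂ c₃ (sliceGram (u + t • v) (u + t • v)))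
      (gramPotentialDeriv c₁ c₂ c₃ (sliceGram u u) (sliceGram v u + sliceGram u v)) 0 := by
  have hline : HasDerivAt (fun t : ℝ => u + t • v) v 0 := by
    simpa using ((hasDerivAt_id (0 : ℝ)).smul_const v).const_add u
  simpa only [zero_smul, add_zero] using
    hasDerivAt_gramPotential c₁ c₂ c₃ (hasDerivAt_sliceGram hline hline)

lemma hasDerivAt_gramPotentialDeriv_sliceGram_line (u v w : ι → β → γ → ℝ) :
    HasDerivAt (fun s : ℝ => gramPotentialDeriv c₁ c₂ c₃ (sliceGram (u + s • w) (u + s • w))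
        (sliceGram v (u + s • w) + sliceGram (u + s • w) v))
      (gramHessian c₁ c₂ c₃ u v w) 0 := by
  have hline : HasDerivAt (fun s : ℝ => u + s • w) w 0 := by
    simpa using ((hasDerivAt_id (0 : ℝ)).smul_const w).const_add u
  have hconst := hasDerivAt_const (0 : ℝ) v
  have h := hasDerivAt_gramPotentialDeriv c₁ c₂ c₃ (hasDerivAt_sliceGram hline hline)
    (K := fun s => sliceGram v (u + s • w) + sliceGram (u + s • w) v)
    (K' := sliceGram v w + sliceGram w v)
    (fun x y => by
      simpa only [Matrix.add_apply, sliceGram_zero_left, sliceGram_zero_right, Matrix.zero_apply,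
        zero_add, add_zero] using
        (hasDerivAt_sliceGram hconst hline x y).fun_add (hasDerivAt_sliceGram hline hconst x y))
  simpa only [gramHessian, zero_smul, add_zero] using h

end SecondVariation

lemma potV_eq_gramPotential (N : ℕ) (l2 ld lp a1 : ℝ) (ψ : Fin N → Fin N → Fin N → ℝ) :
    potV N l2 ld lp 0 a1 0 0 ψ =
      gramPotential (l2 / 2) (ld / (4 * (N : ℝ) ^ 3)) (lp * a1 / (4 * (N : ℝ) ^ 2))
        (sliceGram ψ ψ) := by
  rw [gramPotential, frobInner_sliceGram_sliceGram, trace_sliceGram]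
  simp only [potV, sq]
  ring

lemma hessApply_eq (N : ℕ) (l2 ld lp a1 : ℝ) (φ χ : Fin N → Fin N → Fin N → ℝ)
    (a b c : Fin N) :
    hessApply N l2 ld lp 0 a1 0 0 φ χ a b c =
      gramHessian (l2 / 2) (ld / (4 * (N : ℝ) ^ 3)) (lp * a1 / (4 * (N : ℝ) ^ 2))
        φ χ (basisTensor a b c) := by
  have hfirst : ∀ s : ℝ, deriv (fun t : ℝ => potV N l2 ld lp 0 a1 0 0
      (fun a' b' c' => φ a' b' c' + t * χ a' b' c' + s * basisTensor a b c a' b' c')) 0 =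
      gramPotentialDeriv (l2 / 2) (ld / (4 * (N : ℝ) ^ 3)) (lp * a1 / (4 * (N : ℝ) ^ 2))
        (sliceGram (φ + s • basisTensor a b c) (φ + s • basisTensor a b c))
        (sliceGram χ (φ + s • basisTensor a b c) + sliceGram (φ + s • basisTensor a b c) χ) := by
    intro s
    have hpot : (fun t : ℝ => potV N l2 ld lp 0 a1 0 0
        (fun a' b' c' => φ a' b' c' + t * χ a' b' c' + s * basisTensor a b c a' b' c')) =
        fun t : ℝ => gramPotential (l2 / 2) (ld / (4 * (N : ℝ) ^ 3)) (lp * a1 / (4 * (N : ℝ) ^ 2))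
          (sliceGram (φ + s • basisTensor a b c + t • χ) (φ + s • basisTensor a b c + t • χ)) := by
      ext t
      rw [← potV_eq_gramPotential]
      congr 1
      ext a' b' c'
      simp only [Pi.add_apply, Pi.smul_apply, smul_eq_mul]
      ring
    rw [hpot]
    exact (hasDerivAt_gramPotential_sliceGram_line _ _ _ _ _).deriv
  have h := (hasDerivAt_gramPotentialDeriv_sliceGram_line (l2 / 2) (ld / (4 * (N : ℝ) ^ 3))
    (lp * a1 / (4 * (N : ℝ) ^ 2)) φ χ (basisTensor a b c)).deriv
  rw [← funext hfirst] at h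
  exact h

lemma gramHessian_sliceMul_basisTensor {ι β γ : Type*} [Fintype ι] [Fintype β] [Fintype γ]
    [DecidableEq ι] [DecidableEq β] [DecidableEq γ] (c₁ c₂ c₃ k : ℝ) (u : ι → β → γ → ℝ)
    (hu : sliceGram u u = k • 1) (S : Matrix ι ι ℝ) (hS : S.IsSymm) (a : ι) (b : β) (c : γ) :
    gramHessian c₁ c₂ c₃ u (sliceMul S u) (basisTensor a b c) =
      (2 * c₁ + 4 * c₂ * k * Fintype.card ι + 12 * c₃ * k) * sliceMul S u a b c
        + 8 * c₂ * k * S.trace * u a b c := by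
  have hSu : sliceGram (sliceMul S u) u = k • S := by
    rw [sliceGram_sliceMul_left, hu, Matrix.mul_smul, Matrix.mul_one]
  have huS : sliceGram u (sliceMul S u) = k • S := by
    rw [sliceGram_sliceMul_right, hu, hS.eq, smul_mul, one_mul]
  have hSu_apply : sliceMul S u a b c = (S *ᵥ fun y => u y b c) a := rfl
  simp only [gramHessian, hSu, huS, hu, trace_add, trace_smul, trace_one, frobInner_add_left,
    frobInner_smul_one_left, trace_sliceGram_basisTensor_left, trace_sliceGram_basisTensor_right,
    frobInner_sliceGram_basisTensor_left, frobInner_sliceGram_basisTensor_right, transpose_add,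
    transpose_smul, hS.eq, add_mulVec, smul_mulVec, Pi.add_apply, Pi.smul_apply, smul_eq_mul,
    hSu_apply]
  ring

lemma hessApply_sliceMul (N : ℕ) (l2 ld lp a1 ρ : ℝ) (φ : Fin N → Fin N → Fin N → ℝ)
    (hφ : sliceGram φ φ = ((N : ℝ) ^ 2 * ρ) • 1) (S : Matrix (Fin N) (Fin N) ℝ) (hS : S.IsSymm) :
    hessApply N l2 ld lp 0 a1 0 0 φ (sliceMul S φ) =
      (l2 + (ld + 3 * lp * a1) * ρ) • sliceMul S φ + (2 * ld * ρ * S.trace / N) • φ := by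
  ext a b c
  have hN : (N : ℝ) ≠ 0 := Nat.cast_ne_zero.2 a.pos.ne'
  rw [hessApply_eq, gramHessian_sliceMul_basisTensor _ _ _ _ φ hφ S hS, Fintype.card_fin]
  simp only [Pi.add_apply, Pi.smul_apply, smul_eq_mul]
  field_simp
  ring

theorem orthogonal_slices_hessian_general (N : ℕ)
    (l2 ld lp lt a1 a2 a3 : ℝ)
    (ha2 : a2 = 0) (ha3 : a3 = 0) (hlt : lt = 0) (hD0 : ld + lp * a1 ≠ 0)
    (φ : Fin N → Fin N → Fin N → ℝ) (ρ : ℝ)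
    (horth : ∀ a a', ∑ b, ∑ c, φ a b c * φ a' b c
      = (N : ℝ) ^ 2 * ρ * (if a = a' then 1 else 0))
    (hsol : l2 + (ld + lp * a1) * ρ = 0) :
    (hessApply N l2 ld lp lt a1 a2 a3 φ φ = fun a b c => -2 * l2 * φ a b c)
    ∧ (∀ S : Fin N → Fin N → ℝ, (∀ a a', S a a' = S a' a) → (∑ a, S a a) = 0 →
        hessApply N l2 ld lp lt a1 a2 a3 φ (fun a b c => ∑ a', S a a' * φ a' b c)
          = fun a b c =>
            -2 * l2 * lp * a1 / (lp * a1 + ld) * ∑ a', S a a' * φ a' b c) := by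
  subst ha2 ha3 hlt
  have hφ : sliceGram φ φ = ((N : ℝ) ^ 2 * ρ) • 1 := by
    ext a a'
    simpa [sliceGram, one_apply] using horth a a'
  refine ⟨?_, fun S hS htr => ?_⟩
  · have h := hessApply_sliceMul N l2 ld lp a1 ρ φ hφ 1 isSymm_one
    rw [sliceMul_one, trace_one, Fintype.card_fin] at h
    ext a b c
    have hN : (N : ℝ) ≠ 0 := Nat.cast_ne_zero.2 a.pos.ne'
    rw [h]
    simp only [Pi.add_apply, Pi.smul_apply, smul_eq_mul]
    field_simp
    linear_combination 3 * φ a b c * hsol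
  · have h := hessApply_sliceMul N l2 ld lp a1 ρ φ hφ S (IsSymm.ext fun i j => hS j i)
    have htr' : Matrix.trace S = 0 := htr
    have hcoef : l2 + (ld + 3 * lp * a1) * ρ = -2 * l2 * lp * a1 / (lp * a1 + ld) := by
      rw [eq_div_iff (by rwa [add_comm])]
      linear_combination (3 * lp * a1 + ld) * hsol
    rw [htr', hcoef] at h
    refine h.trans ?_
    ext a b c
    simp [sliceMul]

/-- For `α₂ = α₃ = λ_t = 0`, at a solution with orthogonal slices of common squared norm
`N²ρ`: (1) `H(φ)φ = -2λ₂ φ`; (2) for symmetric traceless `S`, the tensor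
`χ_{abc} = Σ_{a'} S_{aa'} φ_{a'bc}` satisfies `H(φ)χ = [-2λ₂λ_pα₁/(λ_pα₁+λ_d)] χ`. -/
theorem orthogonal_slices_hessian (N : ℕ) (hN : 1 ≤ N)
    (l2 ld lp lt a1 a2 a3 : ℝ)
    (ha2 : a2 = 0) (ha3 : a3 = 0) (hlt : lt = 0) (hD0 : ld + lp * a1 ≠ 0)
    (φ : Fin N → Fin N → Fin N → ℝ) (ρ : ℝ) (hρ : 0 < ρ)
    (horth : ∀ a a', ∑ b, ∑ c, φ a b c * φ a' b c
      = (N : ℝ) ^ 2 * ρ * (if a = a' then 1 else 0))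
    (hsol : l2 + (ld + lp * a1) * ρ = 0) :
    (hessApply N l2 ld lp lt a1 a2 a3 φ φ = fun a b c => -2 * l2 * φ a b c)
    ∧ (∀ S : Fin N → Fin N → ℝ, (∀ a a', S a a' = S a' a) → (∑ a, S a a) = 0 →
        hessApply N l2 ld lp lt a1 a2 a3 φ (fun a b c => ∑ a', S a a' * φ a' b c)
          = fun a b c =>
            -2 * l2 * lp * a1 / (lp * a1 + ld) * ∑ a', S a a' * φ a' b c) :=
  orthogonal_slices_hessian_general N l2 ld lp lt a1 a2 a3 ha2 ha3 hlt hD0 φ ρ horth hsol
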